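/- Let N be a positive integer divisible by 8, and let u, h ∈ ZMod N satisfy u·h = N/8 in ZMod N. Define ψ_h : ZMod N → ℂ by ψ_h(g) = cas(2π·(g·h).val/N)/√N, and let Neg be the operator on functions f : ZMod N → ℂ given by (Neg f)(g) = f(−g). Then the shifted vector g ↦ ψ_h(g + u) is fixed by Neg (eigenvalue +1), while the shifted vector g ↦ ψ_{−h}(g + u) is sent by Neg to its negative (eigenvalue −1). -/
import Mathlib

/-- The `cas` function: `cas x = cos x + sin x`. -/
noncomputable def cas (x : ℝ) : ℝ := Real.cos x + Real.sin x

/-- The Hartley money state `ψ_h : ZMod N → ℂ`. -/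
noncomputable def hartleyState (N : ℕ) (h : ZMod N) : ZMod N → ℂ :=
  fun g => ((cas (2 * Real.pi * (g * h).val / N) / Real.sqrt N : ℝ) : ℂ)

/-- The negation operator `(Neg f)(g) = f(-g)` on functions `ZMod N → ℂ`. -/
def negOp (N : ℕ) (f : ZMod N → ℂ) : ZMod N → ℂ := fun g => f (-g)

lemma cas_eq_of_sum (x y : ℝ) (k : ℤ) (hxy : x + y = Real.pi/2 + 2*Real.pi*k) :
    cas x = cas y := by
  have hy : y = (Real.pi/2 - x) + k * (2*Real.pi) := by linarith
  rw [hy]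
  unfold cas
  rw [Real.cos_add_int_mul_two_pi, Real.sin_add_int_mul_two_pi,
    Real.cos_pi_div_two_sub, Real.sin_pi_div_two_sub]
  ring

lemma cas_eq_neg_of_sum (x y : ℝ) (k : ℤ) (hxy : x + y = -(Real.pi/2) + 2*Real.pi*k) :
    cas x = -cas y := by
  have hy : y = (-(Real.pi/2) - x) + k * (2*Real.pi) := by linarith
  rw [hy]
  unfold cas
  rw [Real.cos_add_int_mul_two_pi, Real.sin_add_int_mul_two_pi, Real.cos_sub, Real.sin_sub,
    Real.cos_neg, Real.sin_neg, Real.cos_pi_div_two, Real.sin_pi_div_two]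
  ring

lemma val_sum_int (N : ℕ) [NeZero N] (z w v : ZMod N) (hz : z + w = v) :
    (N : ℤ) ∣ ((z.val : ℤ) + w.val - v.val) := by
  have : (((z.val : ℤ) + w.val - v.val : ℤ) : ZMod N) = 0 := by
    push_cast [ZMod.natCast_val, ZMod.cast_id]
    rw [hz]; ring
  exact (ZMod.intCast_zmod_eq_zero_iff_dvd _ _).mp this

/-- If `8 ∣ N` and `u * h = N/8` in `ZMod N`, then the shifted state
`g ↦ ψ_h(g + u)` is a `+1`-eigenvector of the negation operator, while
`g ↦ ψ_{-h}(g + u)` is a `-1`-eigenvector. -/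
theorem shifted_hartleyState_negOp_eigen (N : ℕ) [NeZero N] (h8 : (8 : ℕ) ∣ N)
    (u h : ZMod N) (huh : u * h = ((N / 8 : ℕ) : ZMod N)) :
    negOp N (fun g => hartleyState N h (g + u)) = (fun g => hartleyState N h (g + u)) ∧
      negOp N (fun g => hartleyState N (-h) (g + u)) =
        -(fun g => hartleyState N (-h) (g + u)) := by
  obtain ⟨m, rfl⟩ := h8
  have hm : 0 < m := Nat.pos_of_ne_zero (by rintro rfl; exact (NeZero.ne (8*0)) rfl)
  have hN8 : (8 * m) / 8 = m := by omega
  rw [hN8] at huh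
  have hNR : ((8 * m : ℕ) : ℝ) ≠ 0 := by positivity
  have hpi := Real.pi_pos
  constructor
  · funext g
    simp only [negOp, hartleyState]
    norm_cast
    congr 1
    set a := ((-g + u) * h).val with ha
    set b := ((g + u) * h).val with hb
    have hsum : (-g + u) * h + (g + u) * h = ((2 * m : ℕ) : ZMod (8*m)) := by
      rw [show ((-g + u) * h + (g + u) * h) = 2 * (u * h) by ring, huh]
      push_cast; ring
    have hdvd := val_sum_int (8*m) _ _ _ hsum
    have hval2m : (((2 * m : ℕ) : ZMod (8*m))).val = 2 * m := by
      apply ZMod.val_cast_of_lt; omega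
    rw [hval2m] at hdvd
    obtain ⟨k, hk⟩ := hdvd
    apply cas_eq_of_sum _ _ k
    have hR : (a : ℝ) + b = 2 * m + (8*m) * k := by
      have : ((a : ℤ) + b : ℝ) = ((2 * m : ℤ) + (8*m) * k : ℝ) := by
        norm_cast; omega
      push_cast at this ⊢; linarith
    field_simp
    push_cast at hR ⊢
    nlinarith [hR]
  · funext g
    simp only [negOp, hartleyState, Pi.neg_apply]
    set a := ((-g + u) * (-h)).val with ha
    set b := ((g + u) * (-h)).val with hb
    have h6m : ((6 * m : ℕ) : ZMod (8*m)) = -(((2 * m : ℕ) : ZMod (8*m))) := by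
      have h0 : ((8 * m : ℕ) : ZMod (8*m)) = 0 := ZMod.natCast_self _
      push_cast at h0 ⊢
      linear_combination h0
    have hsum : (-g + u) * (-h) + (g + u) * (-h) = ((6 * m : ℕ) : ZMod (8*m)) := by
      rw [show ((-g + u) * (-h) + (g + u) * (-h)) = -(2 * (u * h)) by ring, huh, h6m]
      push_cast; ring
    have hdvd := val_sum_int (8*m) _ _ _ hsum
    have hval6m : (((6 * m : ℕ) : ZMod (8*m))).val = 6 * m := by
      apply ZMod.val_cast_of_lt; omega
    rw [hval6m] at hdvd
    obtain ⟨k, hk⟩ := hdvd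
    have key : cas (2 * Real.pi * a / (8*m : ℕ)) = -cas (2 * Real.pi * b / (8*m : ℕ)) := by
      apply cas_eq_neg_of_sum _ _ (k + 1)
      have hR : (a : ℝ) + b = 6 * m + (8*m) * k := by
        have : ((a : ℤ) + b : ℝ) = ((6 * m : ℤ) + (8*m) * k : ℝ) := by
          norm_cast; omega
        push_cast at this ⊢; linarith
      field_simp
      push_cast at hR ⊢
      nlinarith [hR]
    rw [key]
    push_cast
    ring
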